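/- Let σ = ∃x σ₀(x) be a pure 1-Σ₁ sentence with ℕ ⊨ ¬σ. Let N be an L_a-structure and 𝔳 ∈ N with N ⊨ cert(𝔳) ∧ σ₀(𝔳). Then N ⊨ m̄ < 𝔳 for every m ∈ ℕ; in particular, every witness of σ^cert in any model is nonstandard. -/

import Mathlib

open FirstOrder FirstOrder.Language

/-- Function symbols of the arithmetic language `L_a = {0, S, +, ×, ≤}`. -/
inductive AFunc : ℕ → Type
  | zero : AFunc 0
  | succ : AFunc 1
  | add : AFunc 2
  | mul : AFunc 2

/-- Relation symbols of `L_a`: the single binary relation `≤`. -/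
inductive ARel : ℕ → Type
  | le : ARel 2

/-- The first-order language of arithmetic `L_a = {0, S, +, ×, ≤}`. -/
def La : Language := ⟨AFunc, ARel⟩

/-- The standard model ℕ as an `La`-structure. -/
instance : La.Structure ℕ where
  funMap := fun {n} f => match f with
    | .zero => fun _ => 0
    | .succ => fun v => v 0 + 1
    | .add => fun v => v 0 + v 1
    | .mul => fun v => v 0 * v 1
  RelMap := fun {n} r => match r with
    | .le => fun v => v 0 ≤ v 1

/-- The term `0`. -/
def zeroT {β : Type} : La.Term β := Term.func AFunc.zero ![]
/-- The term `S t`. -/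
def succT {β : Type} (t : La.Term β) : La.Term β := Term.func AFunc.succ ![t]
/-- The term `t + u`. -/
def addT {β : Type} (t u : La.Term β) : La.Term β := Term.func AFunc.add ![t, u]
/-- The term `t × u`. -/
def mulT {β : Type} (t u : La.Term β) : La.Term β := Term.func AFunc.mul ![t, u]

/-- The numeral `S…S0`. -/
def num {β : Type} : ℕ → La.Term β
  | 0 => zeroT
  | n + 1 => succT (num n)

/-- The atomic formula `t ≤ u`. -/
def leF {α : Type} {n : ℕ} (t u : La.Term (α ⊕ Fin n)) : La.BoundedFormula α n :=
  Relations.boundedFormula ARel.le ![t, u]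

/-- The formula `t < u`, i.e. `t ≤ u ∧ t ≠ u`. -/
def ltF {α : Type} {n : ℕ} (t u : La.Term (α ⊕ Fin n)) : La.BoundedFormula α n :=
  leF t u ⊓ ∼(t =' u)

/-- Lift a term of context `n` to context `n+1`. -/
def liftT {α : Type} {n : ℕ} (t : La.Term (α ⊕ Fin n)) : La.Term (α ⊕ Fin (n + 1)) :=
  t.relabel (Sum.map id Fin.castSucc)

/-- The de Bruijn variable `i` as a term. -/
def vr {α : Type} {n : ℕ} (i : Fin n) : La.Term (α ⊕ Fin n) := Term.var (Sum.inr i)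

/-- Δ₀-formulas of `L_a`: built from atomic formulas by Boolean connectives and
bounded quantifiers `∀ y ≤ t`, `∃ y ≤ t`. -/
inductive IsDelta0 : ∀ {α : Type} {n : ℕ}, La.BoundedFormula α n → Prop
  | falsum {α : Type} {n : ℕ} : IsDelta0 (⊥ : La.BoundedFormula α n)
  | equal {α : Type} {n : ℕ} (t u : La.Term (α ⊕ Fin n)) : IsDelta0 (t =' u)
  | le {α : Type} {n : ℕ} (t u : La.Term (α ⊕ Fin n)) : IsDelta0 (leF t u)
  | imp {α : Type} {n : ℕ} {φ ψ : La.BoundedFormula α n} :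
      IsDelta0 φ → IsDelta0 ψ → IsDelta0 (φ ⟹ ψ)
  | ball {α : Type} {n : ℕ} (t : La.Term (α ⊕ Fin n)) {φ : La.BoundedFormula α (n + 1)} :
      IsDelta0 φ →
      IsDelta0 (∀' (leF (Term.var (Sum.inr (Fin.last n))) (liftT t) ⟹ φ))
  | bex {α : Type} {n : ℕ} (t : La.Term (α ⊕ Fin n)) {φ : La.BoundedFormula α (n + 1)} :
      IsDelta0 φ →
      IsDelta0 (∃' (leF (Term.var (Sum.inr (Fin.last n))) (liftT t) ⊓ φ))

/-- A Σ₁-formula: an existential block (possibly empty) in front of a Δ₀-formula. -/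
def IsSigma1 {α : Type} (φ : La.Formula α) : Prop :=
  ∃ (m : ℕ) (δ : La.BoundedFormula α m), IsDelta0 δ ∧ φ = δ.exs

/-- Pure Δ₀-formulas: Δ₀-formulas in which the atomic subformulas are only
`x₀ = x₁`, `0 = x₀`, `S x₀ = x₁`, `x₀ + x₁ = x₂`, `x₀ × x₁ = x₂`, and `x₀ ≤ x₁`,
with all arguments variables, and the bounds of bounded quantifiers are variables. -/
inductive IsPureDelta0 : ∀ {α : Type} {n : ℕ}, La.BoundedFormula α n → Prop
  | eq {α : Type} {n : ℕ} (w₁ w₂ : α ⊕ Fin n) :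
      IsPureDelta0 ((Term.var w₁ : La.Term _) =' Term.var w₂)
  | zeroEq {α : Type} {n : ℕ} (w : α ⊕ Fin n) :
      IsPureDelta0 ((zeroT : La.Term _) =' Term.var w)
  | succEq {α : Type} {n : ℕ} (w₁ w₂ : α ⊕ Fin n) :
      IsPureDelta0 (succT (Term.var w₁) =' (Term.var w₂ : La.Term _))
  | addEq {α : Type} {n : ℕ} (w₁ w₂ w₃ : α ⊕ Fin n) :
      IsPureDelta0 (addT (Term.var w₁) (Term.var w₂) =' (Term.var w₃ : La.Term _))
  | mulEq {α : Type} {n : ℕ} (w₁ w₂ w₃ : α ⊕ Fin n) :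
      IsPureDelta0 (mulT (Term.var w₁) (Term.var w₂) =' (Term.var w₃ : La.Term _))
  | le {α : Type} {n : ℕ} (w₁ w₂ : α ⊕ Fin n) :
      IsPureDelta0 (leF (Term.var w₁) (Term.var w₂))
  | falsum {α : Type} {n : ℕ} : IsPureDelta0 (⊥ : La.BoundedFormula α n)
  | imp {α : Type} {n : ℕ} {φ ψ : La.BoundedFormula α n} :
      IsPureDelta0 φ → IsPureDelta0 ψ → IsPureDelta0 (φ ⟹ ψ)
  | ball {α : Type} {n : ℕ} (w : α ⊕ Fin n) {φ : La.BoundedFormula α (n + 1)} :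
      IsPureDelta0 φ →
      IsPureDelta0 (∀' (leF (Term.var (Sum.inr (Fin.last n))) (Term.var (Sum.map id Fin.castSucc w)) ⟹ φ))
  | bex {α : Type} {n : ℕ} (w : α ⊕ Fin n) {φ : La.BoundedFormula α (n + 1)} :
      IsPureDelta0 φ →
      IsPureDelta0 (∃' (leF (Term.var (Sum.inr (Fin.last n))) (Term.var (Sum.map id Fin.castSucc w)) ⊓ φ))

/-- A pure Σ₁-formula: an existential block (possibly empty) in front of a pure Δ₀-formula. -/
def IsPureSigma1 {α : Type} (φ : La.Formula α) : Prop :=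
  ∃ (m : ℕ) (δ : La.BoundedFormula α m), IsPureDelta0 δ ∧ φ = δ.exs

/-- A pure 1-Σ₁ sentence: `∃x σ₀(x)` with `σ₀` pure Δ₀ and a single existential quantifier. -/
def IsPure1Sigma1 (σ : La.Sentence) : Prop :=
  ∃ δ : La.BoundedFormula Empty 1, IsPureDelta0 δ ∧ σ = ∃' δ

section Semantics
open FirstOrder.Language.Structure

variable (M : Type) [La.Structure M]

/-- The interpretation of `0` in `M`. -/
def zM : M := funMap (L := La) AFunc.zero ![]
/-- The interpretation of successor in `M`. -/
def sM (x : M) : M := funMap (L := La) AFunc.succ ![x]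
/-- The interpretation of addition in `M`. -/
def addM (x y : M) : M := funMap (L := La) AFunc.add ![x, y]
/-- The interpretation of multiplication in `M`. -/
def mulM (x y : M) : M := funMap (L := La) AFunc.mul ![x, y]
/-- The interpretation of `≤` in `M`. -/
def leM (x y : M) : Prop := RelMap (L := La) ARel.le ![x, y]
/-- `x < y` in `M`: `x ≤ y ∧ x ≠ y`. -/
def ltM (x y : M) : Prop := leM M x y ∧ x ≠ y
/-- The interpretation of the numeral `m̄` in `M`. -/
def natM : ℕ → M
  | 0 => zM M
  | m + 1 => sM M (natM m)

/-- An element `v` of an `L_a`-structure is *certified* if it satisfies the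
certification axioms A1–A10. -/
structure Certified (v : M) : Prop where
  a1 : leM M (zM M) v
  a2 : ∀ x : M, ltM M x v → leM M (sM M x) v
  a3 : ∀ x : M, leM M x (zM M) ↔ x = zM M
  a4 : ∀ x : M, ltM M x v → ∀ y : M, leM M y (sM M x) ↔ (leM M y x ∨ y = sM M x)
  a5 : ∀ x y z : M, leM M x v → leM M y v → leM M z v →
    sM M (addM M (mulM M x y) z) ≠ zM M
  a6 : ∀ x y z w : M, leM M x v → leM M y v → leM M z v → leM M w v →
    sM M (addM M (mulM M x y) z) = sM M w → addM M (mulM M x y) z = w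
  a7 : ∀ x y : M, leM M x v → leM M y v → addM M (mulM M x y) (zM M) = mulM M x y
  a8 : ∀ x y z : M, leM M x v → leM M y v → leM M z v →
    addM M (mulM M x y) (sM M z) = sM M (addM M (mulM M x y) z)
  a9 : ∀ x : M, leM M x v → mulM M x (zM M) = zM M
  a10 : ∀ x y : M, leM M x v → leM M y v → mulM M x (sM M y) = addM M (mulM M x y) x

end Semantics
section Aux
open FirstOrder.Language.Structure FirstOrder.Language.BoundedFormula

variable {M : Type} [La.Structure M]

lemma realize_zeroT {β : Type} (env : β → M) : (zeroT : La.Term β).realize env = zM M := by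
  rw [zeroT, zM]; erw [Term.realize_func]
  congr 1; funext i; exact i.elim0

lemma realize_succT {β : Type} (t : La.Term β) (env : β → M) :
    (succT t).realize env = sM M (t.realize env) := by
  rw [succT, sM]; erw [Term.realize_func]
  congr 1; funext i; fin_cases i <;> rfl

lemma realize_addT {β : Type} (t u : La.Term β) (env : β → M) :
    (addT t u).realize env = addM M (t.realize env) (u.realize env) := by
  rw [addT, addM]; erw [Term.realize_func]
  congr 1; funext i; fin_cases i <;> rfl

lemma realize_mulT {β : Type} (t u : La.Term β) (env : β → M) :
    (mulT t u).realize env = mulM M (t.realize env) (u.realize env) := by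
  rw [mulT, mulM]; erw [Term.realize_func]
  congr 1; funext i; fin_cases i <;> rfl

lemma realize_leF {α : Type} {n : ℕ} (t u : La.Term (α ⊕ Fin n)) (f : α → M) (g : Fin n → M) :
    (leF t u).Realize f g ↔ leM M (t.realize (Sum.elim f g)) (u.realize (Sum.elim f g)) := by
  rw [leF]; erw [BoundedFormula.realize_rel]
  have h : (fun i => (![t, u] i).realize (Sum.elim f g)) =
      ![t.realize (Sum.elim f g), u.realize (Sum.elim f g)] := by
    funext i; fin_cases i <;> rfl
  rw [h, leM]

lemma zM_nat : zM ℕ = 0 := rfl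
lemma sM_nat (a : ℕ) : sM ℕ a = a + 1 := rfl
lemma addM_nat (a b : ℕ) : addM ℕ a b = a + b := rfl
lemma mulM_nat (a b : ℕ) : mulM ℕ a b = a * b := rfl
lemma leM_nat (a b : ℕ) : leM ℕ a b ↔ a ≤ b := Iff.rfl
lemma natM_nat (k : ℕ) : natM ℕ k = k := by
  induction k with
  | zero => rfl
  | succ k ih => show sM ℕ (natM ℕ k) = k + 1; rw [ih]; rfl

end Aux
section Cert
open FirstOrder.Language.Structure

variable {N : Type} [La.Structure N] {v : N} {m : ℕ}

/-- All numerals up to `m` are `≤ 𝔳`. -/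
lemma le_v (hc : Certified N v) (hlt : ∀ k, k < m → ltM N (natM N k) v) :
    ∀ k, k ≤ m → leM N (natM N k) v := by
  intro k hk
  cases k with
  | zero => exact hc.a1
  | succ k => exact hc.a2 _ (hlt k (lt_of_lt_of_le (Nat.lt_succ_self k) hk))

/-- Characterization of the elements `≤ k̄` for `k ≤ m`. -/
lemma le_natM_iff (hc : Certified N v) (hlt : ∀ k, k < m → ltM N (natM N k) v) :
    ∀ k, k ≤ m → ∀ y : N, leM N y (natM N k) ↔ ∃ j, j ≤ k ∧ y = natM N j := by
  intro k
  induction k with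
  | zero =>
    intro _ y
    constructor
    · intro h; exact ⟨0, le_rfl, (hc.a3 y).mp h⟩
    · rintro ⟨j, hj, rfl⟩
      obtain rfl : j = 0 := Nat.le_zero.mp hj
      exact (hc.a3 _).mpr rfl
  | succ k ih =>
    intro hk y
    have hklt := hlt k (by omega)
    have h4 := hc.a4 _ hklt y
    constructor
    · intro h
      rcases h4.mp h with h' | h'
      · obtain ⟨j, hj, rfl⟩ := (ih (by omega) y).mp h'
        exact ⟨j, by omega, rfl⟩
      · exact ⟨k + 1, le_rfl, h'⟩
    · rintro ⟨j, hj, rfl⟩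
      rcases Nat.lt_or_ge j (k + 1) with h' | h'
      · exact h4.mpr (Or.inl ((ih (by omega) _).mpr ⟨j, by omega, rfl⟩))
      · obtain rfl : j = k + 1 := by omega
        exact h4.mpr (Or.inr rfl)

lemma le_natM (hc : Certified N v) (hlt : ∀ k, k < m → ltM N (natM N k) v)
    {j k : ℕ} (hjk : j ≤ k) (hk : k ≤ m) : leM N (natM N j) (natM N k) :=
  (le_natM_iff hc hlt k hk _).mpr ⟨j, hjk, rfl⟩

lemma mul00 (hc : Certified N v) : mulM N (zM N) (zM N) = zM N := hc.a9 _ hc.a1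

lemma add00 (hc : Certified N v) (hlt : ∀ k, k < m → ltM N (natM N k) v) :
    ∀ k, k ≤ m → addM N (mulM N (zM N) (zM N)) (natM N k) = natM N k := by
  intro k
  induction k with
  | zero =>
    intro _
    show addM N (mulM N (zM N) (zM N)) (zM N) = zM N
    rw [hc.a7 _ _ hc.a1 hc.a1, mul00 hc]
  | succ k ih =>
    intro hk
    have h8 := hc.a8 _ _ (natM N k) hc.a1 hc.a1 (le_v hc hlt k (by omega))
    show addM N (mulM N (zM N) (zM N)) (sM N (natM N k)) = sM N (natM N k)
    rw [h8, ih (by omega)]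

lemma sne0 (hc : Certified N v) (hlt : ∀ k, k < m → ltM N (natM N k) v)
    {k : ℕ} (hk : k ≤ m) : sM N (natM N k) ≠ zM N := by
  intro h
  rw [← add00 hc hlt k hk] at h
  exact hc.a5 _ _ _ hc.a1 hc.a1 (le_v hc hlt k hk) h

lemma sinj (hc : Certified N v) (hlt : ∀ k, k < m → ltM N (natM N k) v)
    {k l : ℕ} (hk : k ≤ m) (hl : l ≤ m)
    (h : sM N (natM N k) = sM N (natM N l)) : natM N k = natM N l := by
  have h' : sM N (addM N (mulM N (zM N) (zM N)) (natM N k)) = sM N (natM N l) := by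
    rw [add00 hc hlt k hk]; exact h
  have h6 := hc.a6 _ _ _ _ hc.a1 hc.a1 (le_v hc hlt k hk) (le_v hc hlt l hl) h'
  rw [add00 hc hlt k hk] at h6
  exact h6

lemma natInj (hc : Certified N v) (hlt : ∀ k, k < m → ltM N (natM N k) v) :
    ∀ k l, k ≤ m → l ≤ m → natM N k = natM N l → k = l := by
  intro k
  induction k with
  | zero =>
    intro l _ hl h
    cases l with
    | zero => rfl
    | succ l => exact absurd h.symm (sne0 hc hlt (by omega))
  | succ k ih =>
    intro l hk hl h
    cases l with
    | zero => exact absurd h (sne0 hc hlt (by omega))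
    | succ l =>
      have := sinj hc hlt (by omega) (by omega) h
      rw [ih l (by omega) (by omega) this]

lemma eq_nat (hc : Certified N v) (hlt : ∀ k, k < m → ltM N (natM N k) v)
    {k l : ℕ} (hk : k ≤ m) (hl : l ≤ m) : natM N k = natM N l ↔ k = l :=
  ⟨natInj hc hlt k l hk hl, fun h => by rw [h]⟩

lemma le_nat (hc : Certified N v) (hlt : ∀ k, k < m → ltM N (natM N k) v)
    {k l : ℕ} (hk : k ≤ m) (hl : l ≤ m) : leM N (natM N k) (natM N l) ↔ k ≤ l := by
  constructor
  · intro h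
    obtain ⟨j, hj, hjeq⟩ := (le_natM_iff hc hlt l hl _).mp h
    rw [natInj hc hlt k j hk (by omega) hjeq]; exact hj
  · intro h; exact le_natM hc hlt h hl

lemma succ_eq_nat (hc : Certified N v) (hlt : ∀ k, k < m → ltM N (natM N k) v)
    {k l : ℕ} (hk : k ≤ m) (hl : l ≤ m) : sM N (natM N k) = natM N l ↔ k + 1 = l := by
  cases l with
  | zero => simp only [Nat.succ_ne_zero, iff_false]; exact sne0 hc hlt hk
  | succ l =>
    constructor
    · intro h
      have := natInj hc hlt k l hk (by omega) (sinj hc hlt hk (by omega) h)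
      omega
    · intro h
      obtain rfl : k = l := by omega
      rfl

lemma repr1 (hc : Certified N v) (hlt : ∀ k, k < m → ltM N (natM N k) v)
    {a : ℕ} (ha : a ≤ m) : mulM N (natM N a) (sM N (zM N)) = natM N a := by
  rw [hc.a10 _ _ (le_v hc hlt a ha) hc.a1, hc.a9 _ (le_v hc hlt a ha), ← mul00 hc]
  exact add00 hc hlt a ha

end Cert
section Arith
open FirstOrder.Language.Structure

variable {N : Type} [La.Structure N] {v : N} {m : ℕ}

lemma add_lem (hc : Certified N v) (hlt : ∀ k, k < m → ltM N (natM N k) v)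
    (hv : natM N m = v) (x y : N) (hx : leM N x v) (hy : leM N y v)
    {d : ℕ} (hd : d ≤ m) (hxy : mulM N x y = natM N d) :
    ∀ b, b ≤ m →
      (d + b ≤ m → addM N (mulM N x y) (natM N b) = natM N (d + b)) ∧
      (m < d + b → ¬ leM N (addM N (mulM N x y) (natM N b)) v) := by
  intro b
  induction b with
  | zero =>
    intro _
    refine ⟨fun _ => ?_, fun h => absurd h (by omega)⟩
    show addM N (mulM N x y) (zM N) = natM N d
    rw [hc.a7 x y hx hy, hxy]
  | succ b ih =>
    intro hb
    have hb' : b ≤ m := by omega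
    have hzb : leM N (natM N b) v := le_v hc hlt b hb'
    have ha8 : addM N (mulM N x y) (natM N (b + 1)) = sM N (addM N (mulM N x y) (natM N b)) :=
      hc.a8 x y (natM N b) hx hy hzb
    constructor
    · intro hdb
      rw [ha8, (ih hb').1 (by omega)]
      rfl
    · intro hdb hle'
      rw [ha8] at hle'
      have hle'' : leM N (sM N (addM N (mulM N x y) (natM N b))) (natM N m) := by
        rw [hv]; exact hle'
      obtain ⟨k, hkm, hk⟩ := (le_natM_iff hc hlt m le_rfl _).mp hle''
      cases k with
      | zero => exact hc.a5 x y (natM N b) hx hy hzb hk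
      | succ k =>
        have h6 := hc.a6 x y (natM N b) (natM N k) hx hy hzb (le_v hc hlt k (by omega)) hk
        by_cases h2 : d + b ≤ m
        · have heq : addM N (mulM N x y) (natM N b) = natM N (d + b) := (ih hb').1 h2
          have : natM N (d + b) = natM N k := heq ▸ h6
          have := natInj hc hlt _ _ h2 (by omega) this
          omega
        · refine (ih hb').2 (by omega) ?_
          rw [h6]
          exact le_v hc hlt k (by omega)

lemma add_big (hc : Certified N v) (hlt : ∀ k, k < m → ltM N (natM N k) v)
    (hv : natM N m = v) (x y : N) (hx : leM N x v) (hy : leM N y v)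
    (hbig : ¬ leM N (mulM N x y) v) :
    ∀ b, b ≤ m → ¬ leM N (addM N (mulM N x y) (natM N b)) v := by
  intro b
  induction b with
  | zero =>
    intro _ h
    have h' : leM N (addM N (mulM N x y) (zM N)) v := h
    rw [hc.a7 x y hx hy] at h'
    exact hbig h'
  | succ b ih =>
    intro hb h
    have hb' : b ≤ m := by omega
    have ha8 : addM N (mulM N x y) (natM N (b + 1)) = sM N (addM N (mulM N x y) (natM N b)) :=
      hc.a8 x y (natM N b) hx hy (le_v hc hlt b hb')
    rw [ha8] at h
    have h'' : leM N (sM N (addM N (mulM N x y) (natM N b))) (natM N m) := by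
      rw [hv]; exact h
    obtain ⟨k, hkm, hk⟩ := (le_natM_iff hc hlt m le_rfl _).mp h''
    cases k with
    | zero => exact hc.a5 x y _ hx hy (le_v hc hlt b hb') hk
    | succ k =>
      have h6 := hc.a6 x y _ _ hx hy (le_v hc hlt b hb') (le_v hc hlt k (by omega)) hk
      refine ih hb' ?_
      rw [h6]
      exact le_v hc hlt k (by omega)

lemma mul_lem (hc : Certified N v) (hlt : ∀ k, k < m → ltM N (natM N k) v)
    (hv : natM N m = v) {a : ℕ} (ha : a ≤ m) :
    ∀ b, b ≤ m →
      (a * b ≤ m → mulM N (natM N a) (natM N b) = natM N (a * b)) ∧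
      (m < a * b → ¬ leM N (mulM N (natM N a) (natM N b)) v) := by
  intro b
  induction b with
  | zero =>
    intro _
    refine ⟨fun _ => ?_, fun h => absurd h (by omega)⟩
    show mulM N (natM N a) (zM N) = natM N (a * 0)
    rw [hc.a9 _ (le_v hc hlt a ha)]
    rfl
  | succ b ih =>
    intro hb
    have hb' : b ≤ m := by omega
    have hmulsucc : a * (b + 1) = a * b + a := Nat.mul_succ a b
    have ha10 : mulM N (natM N a) (natM N (b + 1)) =
        addM N (mulM N (natM N a) (natM N b)) (natM N a) :=
      hc.a10 _ _ (le_v hc hlt a ha) (le_v hc hlt b hb')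
    by_cases h1 : a * b ≤ m
    · have hprod := (ih hb').1 h1
      have hadd := add_lem hc hlt hv (natM N a) (natM N b) (le_v hc hlt a ha)
        (le_v hc hlt b hb') h1 hprod a ha
      constructor
      · intro h2
        rw [ha10, hadd.1 (by omega)]
        congr 1
      · intro h2
        rw [ha10]
        exact hadd.2 (by omega)
    · have hbig := (ih hb').2 (by omega)
      refine ⟨fun h2 => absurd h2 (by omega), fun _ => ?_⟩
      rw [ha10]
      exact add_big hc hlt hv _ _ (le_v hc hlt a ha) (le_v hc hlt b hb') hbig a ha

lemma add_eq_nat (hc : Certified N v) (hlt : ∀ k, k < m → ltM N (natM N k) v)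
    (hv : natM N m = v) {a b c : ℕ} (ha : a ≤ m) (hb : b ≤ m) (hcm : c ≤ m) :
    addM N (natM N a) (natM N b) = natM N c ↔ a + b = c := by
  rcases Nat.eq_zero_or_pos m with hm | hm
  · obtain rfl : a = 0 := by omega
    obtain rfl : b = 0 := by omega
    obtain rfl : c = 0 := by omega
    have h0 : addM N (mulM N (zM N) (zM N)) (natM N 0) = natM N 0 := add00 hc hlt 0 (Nat.zero_le m)
    rw [mul00 hc] at h0
    exact ⟨fun _ => rfl, fun _ => h0⟩
  · have h1v : leM N (sM N (zM N)) v := le_v hc hlt 1 hm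
    have hrepr := repr1 hc hlt ha
    have key := add_lem hc hlt hv (natM N a) (sM N (zM N)) (le_v hc hlt a ha) h1v ha hrepr b hb
    rw [hrepr] at key
    by_cases h1 : a + b ≤ m
    · have heq := key.1 h1
      constructor
      · intro h
        exact natInj hc hlt _ _ h1 hcm (heq.symm.trans h)
      · intro h
        rw [heq, h]
    · have hni := key.2 (by omega)
      constructor
      · intro h
        rw [h] at hni
        exact absurd (le_v hc hlt c hcm) hni
      · intro h
        exact absurd h (by omega)

lemma mul_eq_nat (hc : Certified N v) (hlt : ∀ k, k < m → ltM N (natM N k) v)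
    (hv : natM N m = v) {a b c : ℕ} (ha : a ≤ m) (hb : b ≤ m) (hcm : c ≤ m) :
    mulM N (natM N a) (natM N b) = natM N c ↔ a * b = c := by
  have key := mul_lem hc hlt hv ha b hb
  by_cases h1 : a * b ≤ m
  · have heq := key.1 h1
    constructor
    · intro h
      exact natInj hc hlt _ _ h1 hcm (heq.symm.trans h)
    · intro h
      rw [heq, h]
  · have hni := key.2 (by omega)
    constructor
    · intro h
      rw [h] at hni
      exact absurd (le_v hc hlt c hcm) hni
    · intro h
      exact absurd h (by omega)

end Arith
section Abs
open FirstOrder.Language.Structure FirstOrder.Language.BoundedFormula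

variable {N : Type} [La.Structure N] {v : N} {m : ℕ}

lemma elim_natM {α : Type} {n : ℕ} (f : α → ℕ) (g : Fin n → ℕ) (w : α ⊕ Fin n) :
    Sum.elim (fun a => natM N (f a)) (fun i => natM N (g i)) w = natM N (Sum.elim f g w) := by
  cases w <;> rfl

lemma elim_le {α : Type} {n : ℕ} (f : α → ℕ) (g : Fin n → ℕ)
    (hf : ∀ a, f a ≤ m) (hg : ∀ i, g i ≤ m) (w : α ⊕ Fin n) : Sum.elim f g w ≤ m := by
  cases w with
  | inl a => exact hf a
  | inr i => exact hg i

lemma snoc_natM {n : ℕ} (g : Fin n → ℕ) (j : ℕ) :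
    (Fin.snoc (fun i => natM N (g i)) (natM N j) : Fin (n + 1) → N) =
      fun i => natM N ((Fin.snoc g j : Fin (n + 1) → ℕ) i) := by
  funext i
  refine Fin.lastCases ?_ ?_ i
  · simp [Fin.snoc_last]
  · intro i; simp [Fin.snoc_castSucc]

lemma bound_eval {M : Type} [La.Structure M] {α : Type} {n : ℕ}
    (F : α → M) (G : Fin n → M) (x : M) (w : α ⊕ Fin n) :
    Sum.elim F (Fin.snoc G x) (Sum.map id Fin.castSucc w) = Sum.elim F G w := by
  cases w with
  | inl a => rfl
  | inr i => simp [Fin.snoc_castSucc]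

lemma absolute (hc : Certified N v) (hlt : ∀ k, k < m → ltM N (natM N k) v)
    (hv : natM N m = v) :
    ∀ {α : Type} {n : ℕ} {φ : La.BoundedFormula α n}, IsPureDelta0 φ →
      ∀ (f : α → ℕ) (g : Fin n → ℕ), (∀ a, f a ≤ m) → (∀ i, g i ≤ m) →
        (φ.Realize f g ↔ φ.Realize (fun a => natM N (f a)) (fun i => natM N (g i))) := by
  intro α n φ h
  induction h with
  | eq w₁ w₂ =>
    intro f g hf hg
    rw [realize_bdEqual, realize_bdEqual, Term.realize_var, Term.realize_var,
      Term.realize_var, Term.realize_var, elim_natM, elim_natM]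
    exact (eq_nat hc hlt (elim_le f g hf hg w₁) (elim_le f g hf hg w₂)).symm
  | zeroEq w =>
    intro f g hf hg
    rw [realize_bdEqual, realize_bdEqual, realize_zeroT, realize_zeroT,
      Term.realize_var, Term.realize_var, elim_natM]
    show (0 = Sum.elim f g w) ↔ (natM N 0 = natM N (Sum.elim f g w))
    exact (eq_nat hc hlt (Nat.zero_le m) (elim_le f g hf hg w)).symm
  | succEq w₁ w₂ =>
    intro f g hf hg
    rw [realize_bdEqual, realize_bdEqual, realize_succT, realize_succT,
      Term.realize_var, Term.realize_var, Term.realize_var, Term.realize_var,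
      elim_natM, elim_natM]
    show (Sum.elim f g w₁ + 1 = Sum.elim f g w₂) ↔ _
    exact (succ_eq_nat hc hlt (elim_le f g hf hg w₁) (elim_le f g hf hg w₂)).symm
  | addEq w₁ w₂ w₃ =>
    intro f g hf hg
    rw [realize_bdEqual, realize_bdEqual, realize_addT, realize_addT,
      Term.realize_var, Term.realize_var, Term.realize_var, Term.realize_var,
      Term.realize_var, Term.realize_var, elim_natM, elim_natM, elim_natM]
    show (Sum.elim f g w₁ + Sum.elim f g w₂ = Sum.elim f g w₃) ↔ _
    exact (add_eq_nat hc hlt hv (elim_le f g hf hg w₁) (elim_le f g hf hg w₂)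
      (elim_le f g hf hg w₃)).symm
  | mulEq w₁ w₂ w₃ =>
    intro f g hf hg
    rw [realize_bdEqual, realize_bdEqual, realize_mulT, realize_mulT,
      Term.realize_var, Term.realize_var, Term.realize_var, Term.realize_var,
      Term.realize_var, Term.realize_var, elim_natM, elim_natM, elim_natM]
    show (Sum.elim f g w₁ * Sum.elim f g w₂ = Sum.elim f g w₃) ↔ _
    exact (mul_eq_nat hc hlt hv (elim_le f g hf hg w₁) (elim_le f g hf hg w₂)
      (elim_le f g hf hg w₃)).symm
  | le w₁ w₂ =>
    intro f g hf hg
    rw [realize_leF, realize_leF, Term.realize_var, Term.realize_var,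
      Term.realize_var, Term.realize_var, elim_natM, elim_natM]
    show (Sum.elim f g w₁ ≤ Sum.elim f g w₂) ↔ _
    exact (le_nat hc hlt (elim_le f g hf hg w₁) (elim_le f g hf hg w₂)).symm
  | falsum =>
    intro f g hf hg
    simp [realize_bot]
  | imp h₁ h₂ ih₁ ih₂ =>
    intro f g hf hg
    rw [realize_imp, realize_imp, ih₁ f g hf hg, ih₂ f g hf hg]
  | ball w hφ ih =>
    intro f g hf hg
    have hbm : Sum.elim f g w ≤ m := elim_le f g hf hg w
    rw [realize_all, realize_all]
    constructor
    · intro H x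
      rw [realize_imp, realize_leF, Term.realize_var, Term.realize_var,
        Sum.elim_inr, Fin.snoc_last, bound_eval, elim_natM]
      intro hx
      obtain ⟨j, hj, rfl⟩ := (le_natM_iff hc hlt _ hbm x).mp hx
      rw [snoc_natM]
      refine (ih f (Fin.snoc g j) hf ?_).mp ?_
      · intro i
        refine Fin.lastCases ?_ ?_ i
        · rw [Fin.snoc_last]; omega
        · intro i; rw [Fin.snoc_castSucc]; exact hg i
      · have H' := H j
        rw [realize_imp, realize_leF, Term.realize_var, Term.realize_var,
          Sum.elim_inr, Fin.snoc_last, bound_eval] at H'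
        exact H' hj
    · intro H x
      rw [realize_imp, realize_leF, Term.realize_var, Term.realize_var,
        Sum.elim_inr, Fin.snoc_last, bound_eval]
      intro hx
      have hx' : x ≤ Sum.elim f g w := hx
      have H' := H (natM N x)
      rw [realize_imp, realize_leF, Term.realize_var, Term.realize_var,
        Sum.elim_inr, Fin.snoc_last, bound_eval, elim_natM] at H'
      have hxle : leM N (natM N x) (natM N (Sum.elim f g w)) :=
        le_natM hc hlt hx hbm
      have := H' hxle
      rw [snoc_natM] at this
      refine (ih f (Fin.snoc g x) hf ?_).mpr this
      intro i
      refine Fin.lastCases ?_ ?_ i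
      · rw [Fin.snoc_last]; omega
      · intro i; rw [Fin.snoc_castSucc]; exact hg i
  | bex w hφ ih =>
    intro f g hf hg
    have hbm : Sum.elim f g w ≤ m := elim_le f g hf hg w
    rw [realize_ex, realize_ex]
    constructor
    · rintro ⟨x, hx⟩
      rw [realize_inf, realize_leF, Term.realize_var, Term.realize_var,
        Sum.elim_inr, Fin.snoc_last, bound_eval] at hx
      obtain ⟨hxle, hxφ⟩ := hx
      have hx' : x ≤ Sum.elim f g w := hxle
      refine ⟨natM N x, ?_⟩
      rw [realize_inf, realize_leF, Term.realize_var, Term.realize_var,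
        Sum.elim_inr, Fin.snoc_last, bound_eval, elim_natM, snoc_natM]
      refine ⟨le_natM hc hlt hxle hbm, ?_⟩
      refine (ih f (Fin.snoc g x) hf ?_).mp hxφ
      intro i
      refine Fin.lastCases ?_ ?_ i
      · rw [Fin.snoc_last]; omega
      · intro i; rw [Fin.snoc_castSucc]; exact hg i
    · rintro ⟨x, hx⟩
      rw [realize_inf, realize_leF, Term.realize_var, Term.realize_var,
        Sum.elim_inr, Fin.snoc_last, bound_eval, elim_natM] at hx
      obtain ⟨hxle, hxφ⟩ := hx
      obtain ⟨j, hj, rfl⟩ := (le_natM_iff hc hlt _ hbm x).mp hxle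
      refine ⟨j, ?_⟩
      rw [realize_inf, realize_leF, Term.realize_var, Term.realize_var,
        Sum.elim_inr, Fin.snoc_last, bound_eval]
      refine ⟨hj, ?_⟩
      rw [snoc_natM] at hxφ
      refine (ih f (Fin.snoc g j) hf ?_).mpr hxφ
      intro i
      refine Fin.lastCases ?_ ?_ i
      · rw [Fin.snoc_last]; omega
      · intro i; rw [Fin.snoc_castSucc]; exact hg i

end Abs
/-- if `σ = ∃x σ₀(x)` is a false pure 1-Σ₁ sentence and `𝔳` is a certified
witness of `σ₀` in an `L_a`-structure `N`, then `𝔳` lies above every numeral: `N ⊨ m̄ < 𝔳`. -/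
theorem statement9 (σ₀ : La.BoundedFormula Empty 1) (hσ₀ : IsPureDelta0 σ₀)
    (hfalse : ¬ (ℕ ⊨ (∃' σ₀ : La.Sentence)))
    (N : Type) [La.Structure N] (v : N)
    (hc : Certified N v) (hw : σ₀.Realize (M := N) Empty.elim ![v]) :
    ∀ m : ℕ, ltM N (natM N m) v := by
  intro m0
  by_contra hcon
  have hex : ∃ m, ¬ ltM N (natM N m) v := ⟨m0, hcon⟩
  classical
  set m := Nat.find hex with hmdef
  have hm : ¬ ltM N (natM N m) v := Nat.find_spec hex
  have hlt : ∀ k, k < m → ltM N (natM N k) v := fun k hk =>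
    not_not.mp (Nat.find_min hex hk)
  have hle : leM N (natM N m) v := le_v hc hlt m le_rfl
  have hv : natM N m = v := by
    by_contra h
    exact hm ⟨hle, h⟩
  -- transfer the witness down to ℕ via absoluteness
  have e1 : (Empty.elim : Empty → N) = fun a => natM N ((Empty.elim : Empty → ℕ) a) := by
    funext a; exact a.elim
  have e2 : (![v] : Fin 1 → N) = fun i => natM N ((![m] : Fin 1 → ℕ) i) := by
    funext i
    fin_cases i
    exact hv.symm
  have hwN : σ₀.Realize (M := N) (fun a => natM N ((Empty.elim : Empty → ℕ) a))
      (fun i => natM N ((![m] : Fin 1 → ℕ) i)) := by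
    rw [← e1, ← e2]; exact hw
  have hstd : σ₀.Realize (M := ℕ) Empty.elim ![m] :=
    (absolute hc hlt hv hσ₀ Empty.elim ![m] (fun a => a.elim)
      (fun i => by fin_cases i; exact le_rfl)).mpr hwN
  apply hfalse
  refine BoundedFormula.realize_ex.mpr ⟨m, ?_⟩
  have key : ∀ (d : Empty → ℕ) (s : Fin 1 → ℕ), s = ![m] → σ₀.Realize d s := by
    intro d s hs
    have hd : d = Empty.elim := funext fun a => a.elim
    rw [hd, hs]; exact hstd
  exact key _ _ (funext fun i => by fin_cases i; rfl)
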